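/- arXiv:1802.00137 — 3 statements merged into one kernel-verified Lean document; each statement's English description precedes it below -/
import Mathlib

section
/- Let $m \ge 2$ be an integer and $m_0 := \lfloor m/2 \rfloor + 1$. Let $l, s, p, q$ be integers with $2 \le l \le m_0$, $s \ge 2$, $p \ge 0$, $q \ge 0$, and let $j_1,\dots,j_s$ be integers with $1 \le j_i \le l-1$ for each $i$ and $j_1+\cdots+j_s+q = l+1-p$. Then there exist real numbers $r_1,\dots,r_s, t \in [0, 1/2]$ such that $r_i > \tfrac{1}{2} + \tfrac{j_i - 1 - m_0}{m}$ for each $i$, $t > \tfrac{1}{2} + \tfrac{q - m_0}{m}$, and $r_1 + \cdots + r_s + t = \tfrac{1}{2}$. -/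
/-! The lower bounds are `y k - d` with `d = m0/m - 1/2 > 0` and `y k ≥ 0` the numbers
`(j_i - 1)/m` and `q/m`, whose total is at most `1/2` because `s ≥ 2` and `l ≤ m0`. Since
`y ↦ max 0 (y - d)` is convex and vanishes at `0`, it lies below its chord `(1 - 2d) y` on
`[0, 1/2]`, so the positive parts of the lower bounds sum to at most `(1 - 2d)/2 < 1/2`. Raising
each positive part by the same small amount then produces nonnegative exponents above the bounds
with total exactly `1/2`. -/

open Finset

lemma exists_nonneg_gt_sum_eq {ι : Type*} [Fintype ι] [Nonempty ι] (L : ι → ℝ) {c : ℝ}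
    (h : ∑ k, max 0 (L k) < c) :
    ∃ x : ι → ℝ, (∀ k, 0 ≤ x k ∧ L k < x k) ∧ ∑ k, x k = c := by
  set S := ∑ k, max 0 (L k)
  have hcard : (0 : ℝ) < Fintype.card ι := by exact_mod_cast Fintype.card_pos
  set δ := (c - S) / Fintype.card ι
  have hδ : 0 < δ := div_pos (by linarith) hcard
  refine ⟨fun k => max 0 (L k) + δ, fun k => ⟨by positivity, ?_⟩, ?_⟩
  · linarith [le_max_right 0 (L k)]
  · rw [sum_add_distrib, sum_const, card_univ, nsmul_eq_mul, mul_div_cancel₀ _ hcard.ne']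
    ring

lemma mul_max_sub_le_mul {c d y : ℝ} (hd : 0 ≤ d) (hdc : d ≤ c) (hy : 0 ≤ y)
    (hyc : y ≤ c) :
    c * max 0 (y - d) ≤ (c - d) * y := by
  rw [mul_max_of_nonneg _ _ (hd.trans hdc), mul_zero]
  exact max_le (mul_nonneg (by linarith) hy) (by nlinarith)

lemma sum_max_sub_lt {ι : Type*} [Fintype ι] (y : ι → ℝ) {c d : ℝ} (hd : 0 < d)
    (hdc : d ≤ c) (hy : ∀ k, 0 ≤ y k) (hsum : ∑ k, y k ≤ c) :
    ∑ k, max 0 (y k - d) < c := by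
  have hc : 0 < c := hd.trans_le hdc
  have hyc : ∀ k, y k ≤ c := fun k =>
    (single_le_sum (fun k _ => hy k) (mem_univ k)).trans hsum
  refine lt_of_mul_lt_mul_left ?_ hc.le
  calc c * ∑ k, max 0 (y k - d) ≤ (c - d) * ∑ k, y k := by
        rw [mul_sum, mul_sum]
        exact sum_le_sum fun k _ => mul_max_sub_le_mul hd.le hdc (hy k) (hyc k)
    _ ≤ (c - d) * c := mul_le_mul_of_nonneg_left hsum (by linarith)
    _ < c * c := by nlinarith

lemma one_half_lt_div_two_add_one_div {m : ℕ} (hm : 0 < m) :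
    (1 / 2 : ℝ) < ((m / 2 + 1 : ℕ) : ℝ) / m := by
  have : (m : ℝ) < 2 * (m / 2 + 1 : ℕ) := by
    exact_mod_cast (by omega : m < 2 * (m / 2 + 1))
  rw [lt_div_iff₀ (by exact_mod_cast hm)]; linarith

lemma div_two_add_one_div_le_one {m : ℕ} (hm : 0 < m) : ((m / 2 + 1 : ℕ) : ℝ) / m ≤ 1 :=
  div_le_one_of_le₀ (by exact_mod_cast (by omega : m / 2 + 1 ≤ m)) m.cast_nonneg

lemma sum_sub_one_div_add_div_le_one_half {s : ℕ} (j : Fin s → ℕ) {q m : ℕ} (hm : 0 < m)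
    (h : 2 * (∑ i, j i + q) ≤ m + 2 * s) :
    ∑ i, ((j i : ℝ) - 1) / m + (q : ℝ) / m ≤ 1 / 2 := by
  have h' : 2 * (∑ i, (j i : ℝ) + q) ≤ m + 2 * s := by exact_mod_cast h
  rw [← sum_div, ← add_div, div_le_iff₀ (by exact_mod_cast hm), sum_sub_distrib]
  simp only [sum_const, card_univ, Fintype.card_fin, nsmul_eq_mul, mul_one]
  linarith

theorem stmt_1_general (m : ℕ) (hm : 2 ≤ m) (m0 : ℕ) (hm0 : m0 = m / 2 + 1)
    (l s p q : ℕ) (hlm0 : l ≤ m0) (hs : 2 ≤ s)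
    (j : Fin s → ℕ) (hj : ∀ i, 1 ≤ j i ∧ j i ≤ l - 1)
    (hsum : (∑ i, j i) + q + p = l + 1) :
    ∃ (r : Fin s → ℝ) (t : ℝ),
      (∀ i, r i ∈ Set.Icc (0 : ℝ) (1/2) ∧
        r i > 1/2 + ((j i : ℝ) - 1 - (m0 : ℝ)) / (m : ℝ)) ∧
      t ∈ Set.Icc (0 : ℝ) (1/2) ∧
      t > 1/2 + ((q : ℝ) - (m0 : ℝ)) / (m : ℝ) ∧
      (∑ i, r i) + t = 1/2 := by
  subst hm0
  have hm_pos : 0 < m := by omega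
  have hs_le : s ≤ ∑ i, j i := by
    simpa using sum_le_sum fun i (_ : i ∈ univ) => (hj i).1
  set d : ℝ := ((m / 2 + 1 : ℕ) : ℝ) / m - 1 / 2
  have hd : 0 < d := sub_pos.2 (one_half_lt_div_two_add_one_div hm_pos)
  have hd_le : d ≤ 1 / 2 :=
    (sub_le_sub_right (div_two_add_one_div_le_one hm_pos) _).trans (by norm_num)
  let y : Option (Fin s) → ℝ := fun k => k.elim ((q : ℝ) / m) fun i => ((j i : ℝ) - 1) / m
  have hy : ∀ k, 0 ≤ y k := by
    rintro (_ | i)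
    · exact div_nonneg q.cast_nonneg m.cast_nonneg
    · exact div_nonneg (sub_nonneg.2 (by exact_mod_cast (hj i).1)) m.cast_nonneg
  have hy_sum : ∑ k, y k ≤ 1 / 2 := by
    rw [Fintype.sum_option, add_comm]
    exact sum_sub_one_div_add_div_le_one_half j hm_pos (by omega)
  obtain ⟨x, hx, hx_sum⟩ :=
    exists_nonneg_gt_sum_eq (fun k => y k - d) (sum_max_sub_lt y hd hd_le hy hy_sum)
  have hx_le : ∀ k, x k ≤ 1 / 2 := fun k =>
    hx_sum ▸ single_le_sum (fun k _ => (hx k).1) (mem_univ k)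
  refine ⟨fun i => x (some i), x none, fun i => ⟨⟨(hx _).1, hx_le _⟩, ?_⟩,
    ⟨(hx _).1, hx_le _⟩, ?_, by rw [← hx_sum, Fintype.sum_option, add_comm]⟩
  · have hbound : 1 / 2 + ((j i : ℝ) - 1 - (m / 2 + 1 : ℕ)) / m = y (some i) - d := by
      simp only [y, Option.elim, d]; ring
    exact hbound ▸ (hx (some i)).2
  · have hbound : 1 / 2 + ((q : ℝ) - (m / 2 + 1 : ℕ)) / m = y none - d := by
      simp only [y, Option.elim, d]; ring
    exact hbound ▸ (hx none).2

/-- Existence of Hölder exponents `r i = 1/p_i`, `t = 1/t^*` satisfying the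
Gagliardo–Nirenberg admissibility windows and summing to `1/2`
(proved inside Lemma 3.2 of the paper). Here `m0 = ⌊m/2⌋ + 1`. -/
theorem stmt_1 (m : ℕ) (hm : 2 ≤ m) (m0 : ℕ) (hm0 : m0 = m / 2 + 1)
    (l s p q : ℕ) (hl : 2 ≤ l) (hlm0 : l ≤ m0) (hs : 2 ≤ s)
    (j : Fin s → ℕ) (hj : ∀ i, 1 ≤ j i ∧ j i ≤ l - 1)
    (hsum : (∑ i, j i) + q + p = l + 1) :
    ∃ (r : Fin s → ℝ) (t : ℝ),
      (∀ i, r i ∈ Set.Icc (0 : ℝ) (1/2) ∧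
        r i > 1/2 + ((j i : ℝ) - 1 - (m0 : ℝ)) / (m : ℝ)) ∧
      t ∈ Set.Icc (0 : ℝ) (1/2) ∧
      t > 1/2 + ((q : ℝ) - (m0 : ℝ)) / (m : ℝ) ∧
      (∑ i, r i) + t = 1/2 :=
  stmt_1_general m hm m0 hm0 l s p q hlm0 hs j hj hsum
end

section
/- Let $m \ge 2$ be an integer and $m_0 := \lfloor m/2 \rfloor + 1$. Let $l, s, p$ be integers with $2 \le l \le m_0$, $s \ge 2$, $p \ge 0$, and let $j_1,\dots,j_s$ be integers with $1 \le j_i \le l-1$ for each $i$ and $j_1+\cdots+j_s = l+1-p$. Set $A := \{\, i \in \{1,\dots,s\} : j_i \ge m_0 + 1 - m/2 \,\}$. Then $\left(\tfrac{1}{2} - \tfrac{1+m_0}{m}\right)|A| + \tfrac{1}{m}\sum_{i \in A} j_i < \tfrac{1}{2}$. -/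
/-! With `c = m0 + 1 - m/2`, the inequality is equivalent to `∑_{i∈A} j i < m/2 + c·|A|`.
For `|A| ≤ 1` this follows from `j i ≤ l - 1 < m0 + 1`, and for `|A| ≥ 2` from
`∑_{i∈A} j i ≤ l + 1 ≤ m0 + 1 < m/2 + 2c`, which holds because `m/2 < m0 + 1`. -/

theorem Finset.sum_lt_add_card_mul {ι R : Type*} [Semiring R] [PartialOrder R]
    [IsOrderedRing R] (A : Finset ι) (f : ι → R) {x c : R} (hx : 0 < x) (hc : 0 ≤ c)
    (hf : ∀ i ∈ A, f i < x + c) (hsum : ∑ i ∈ A, f i < x + 2 * c) :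
    ∑ i ∈ A, f i < x + A.card * c := by
  rcases Nat.lt_or_ge A.card 2 with hcard | hcard
  · interval_cases h : A.card
    · simpa [Finset.card_eq_zero.mp h] using hx
    · obtain ⟨i, rfl⟩ := Finset.card_eq_one.mp h
      simpa using hf i (Finset.mem_singleton_self i)
  · calc ∑ i ∈ A, f i < x + 2 * c := hsum
      _ ≤ x + A.card * c := by gcongr; exact_mod_cast Nat.mono_cast (α := R) hcard

theorem stmt_2_general (m : ℕ) (hm : 2 ≤ m) (m0 : ℕ) (hm0 : m0 = m / 2 + 1)
    (l s p : ℕ) (hlm0 : l ≤ m0)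
    (j : Fin s → ℕ) (hj : ∀ i, 1 ≤ j i ∧ j i ≤ l - 1)
    (hsum : (∑ i, j i) + p = l + 1)
    (A : Finset (Fin s)) :
    (1/2 - (1 + (m0 : ℝ)) / (m : ℝ)) * (A.card : ℝ)
      + (∑ i ∈ A, (j i : ℝ)) / (m : ℝ) < 1/2 := by
  have hm_pos : (0 : ℝ) < m := Nat.cast_pos.mpr (by omega)
  have hm_le : (m : ℝ) ≤ 2 * m0 := by exact_mod_cast (show m ≤ 2 * m0 by omega)
  have hl : (l : ℝ) ≤ m0 := by exact_mod_cast hlm0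
  have hj_le (i : Fin s) : (j i : ℝ) + 1 ≤ l := by
    exact_mod_cast (show j i + 1 ≤ l by have := hj i; omega)
  have hsum_le : ∑ i ∈ A, (j i : ℝ) ≤ l + 1 :=
    calc ∑ i ∈ A, (j i : ℝ) ≤ ∑ i, (j i : ℝ) :=
          Finset.sum_le_sum_of_subset_of_nonneg A.subset_univ fun i _ _ => by positivity
      _ ≤ l + 1 := by exact_mod_cast (show ∑ i, j i ≤ l + 1 by omega)
  have key : ∑ i ∈ A, (j i : ℝ) < m / 2 + A.card * (m0 + 1 - m / 2) :=
    A.sum_lt_add_card_mul _ (by positivity) (by linarith)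
      (fun i _ => by linarith [hj_le i]) (by linarith)
  have hlhs : (1/2 - (1 + (m0 : ℝ)) / m) * A.card + (∑ i ∈ A, (j i : ℝ)) / m
      = 1/2 - (m / 2 + A.card * (m0 + 1 - m / 2) - ∑ i ∈ A, (j i : ℝ)) / m := by
    field_simp
    ring
  rw [hlhs]
  exact sub_lt_self _ (div_pos (sub_pos.mpr key) hm_pos)

/-- Case `q = 0` of the arithmetic inequality in the proof of Lemma 3.2:
with `m0 = ⌊m/2⌋ + 1` and `A = {i : j i ≥ m0 + 1 - m/2}`,
`(1/2 - (1+m0)/m)·|A| + (∑_{i∈A} j i)/m < 1/2`. -/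
theorem stmt_2 (m : ℕ) (hm : 2 ≤ m) (m0 : ℕ) (hm0 : m0 = m / 2 + 1)
    (l s p : ℕ) (hl : 2 ≤ l) (hlm0 : l ≤ m0) (hs : 2 ≤ s)
    (j : Fin s → ℕ) (hj : ∀ i, 1 ≤ j i ∧ j i ≤ l - 1)
    (hsum : (∑ i, j i) + p = l + 1)
    (A : Finset (Fin s))
    (hA : A = {i : Fin s | ((j i : ℝ)) ≥ (m0 : ℝ) + 1 - (m : ℝ) / 2}.toFinset) :
    (1/2 - (1 + (m0 : ℝ)) / (m : ℝ)) * (A.card : ℝ)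
      + (∑ i ∈ A, (j i : ℝ)) / (m : ℝ) < 1/2 :=
  stmt_2_general m hm m0 hm0 l s p hlm0 j hj hsum A
end

section
/- Let $m \ge 2$ be an integer and $m_0 := \lfloor m/2 \rfloor + 1$. Let $l, s, p, q$ be integers with $2 \le l \le m_0$, $s \ge 2$, $p \ge 0$, $q \ge 1$, and let $j_1,\dots,j_s$ be integers with $1 \le j_i \le l-1$ for each $i$ and $j_1+\cdots+j_s+q = l+1-p$. Set $A := \{\, i \in \{1,\dots,s\} : j_i \ge m_0 + 1 - m/2 \,\}$. Then $\sum_{i \in A}\left(\tfrac{1}{2} + \tfrac{j_i-1-m_0}{m}\right) + \tfrac{1}{2} + \tfrac{q-m_0}{m} < \tfrac{1}{2}$. -/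
/-!
Since `m0 ≥ m/2`, each summand `1/2 + (j i - 1 - m0)/m` is at most `(j i - 1)/m`, so the left side
minus `1/2` is at most `(∑_{i∈A} j i + q - m0 - #A)/m`. The indices outside `A` contribute at least
`s - #A ≥ 2 - #A` to `∑ j i + q + p = l + 1 ≤ m0 + 1`, which makes the numerator negative.
-/

open Finset

theorem Finset.sum_add_card_compl_le_sum {ι : Type*} [Fintype ι] [DecidableEq ι]
    (A : Finset ι) (j : ι → ℕ) (hj : ∀ i, 1 ≤ j i) :
    ∑ i ∈ A, j i + #Aᶜ ≤ ∑ i, j i := by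
  have hcompl : #Aᶜ ≤ ∑ i ∈ Aᶜ, j i := by
    simpa using Aᶜ.card_nsmul_le_sum j 1 fun i _ => hj i
  rw [← A.sum_add_sum_compl j]
  omega

theorem half_add_div_le_sub_one_div {x c m : ℝ} (hm : 0 < m) (hmc : m ≤ 2 * c) :
    1 / 2 + (x - 1 - c) / m ≤ (x - 1) / m := by
  rw [← sub_nonneg,
    show (x - 1) / m - (1 / 2 + (x - 1 - c) / m) = (c - m / 2) / m by field_simp; ring]
  exact div_nonneg (by linarith) hm.le

theorem sum_half_add_div_le {ι : Type*} (A : Finset ι) (f : ι → ℝ) {c m : ℝ}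
    (hm : 0 < m) (hmc : m ≤ 2 * c) :
    ∑ i ∈ A, (1 / 2 + (f i - 1 - c) / m) ≤ (∑ i ∈ A, f i - #A) / m := by
  calc ∑ i ∈ A, (1 / 2 + (f i - 1 - c) / m)
      ≤ ∑ i ∈ A, (f i - 1) / m := sum_le_sum fun i _ => half_add_div_le_sub_one_div hm hmc
    _ = (∑ i ∈ A, f i - #A) / m := by
      rw [← sum_div, sum_sub_distrib, sum_const, nsmul_one]

theorem stmt_3_general (m : ℕ) (hm : 2 ≤ m) (m0 : ℕ) (hm0 : m0 = m / 2 + 1)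
    (l s p q : ℕ) (hlm0 : l ≤ m0) (hs : 2 ≤ s)
    (j : Fin s → ℕ) (hj : ∀ i, 1 ≤ j i ∧ j i ≤ l - 1)
    (hsum : (∑ i, j i) + q + p = l + 1)
    (A : Finset (Fin s)) :
    (∑ i ∈ A, (1/2 + ((j i : ℝ) - 1 - (m0 : ℝ)) / (m : ℝ)))
      + 1/2 + ((q : ℝ) - (m0 : ℝ)) / (m : ℝ) < 1/2 := by
  have hmpos : (0 : ℝ) < m := by positivity
  have hm_le : (m : ℝ) ≤ 2 * m0 := by exact_mod_cast (by omega : m ≤ 2 * m0)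
  have hcompl := A.sum_add_card_compl_le_sum j fun i => (hj i).1
  have hcard : #A + #Aᶜ = s := by simp [A.card_add_card_compl]
  have hkey : ((∑ i ∈ A, j i : ℕ) : ℝ) + q < m0 + #A := by exact_mod_cast (by omega)
  calc (∑ i ∈ A, (1/2 + ((j i : ℝ) - 1 - (m0 : ℝ)) / (m : ℝ)))
        + 1/2 + ((q : ℝ) - (m0 : ℝ)) / (m : ℝ)
      ≤ (((∑ i ∈ A, j i : ℕ) : ℝ) - #A) / m + 1/2 + ((q : ℝ) - m0) / m := by
        push_cast
        gcongr
        exact sum_half_add_div_le A _ hmpos hm_le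
    _ = 1/2 + ((((∑ i ∈ A, j i : ℕ) : ℝ) + q) - (m0 + #A)) / m := by ring
    _ < 1/2 := by linarith [div_neg_of_neg_of_pos (sub_neg.2 hkey) hmpos]

/-- Case `q ≥ 1` of the arithmetic inequality in the proof of Lemma 3.2:
with `m0 = ⌊m/2⌋ + 1` and `A = {i : j i ≥ m0 + 1 - m/2}`,
`∑_{i∈A} (1/2 + (j i - 1 - m0)/m) + 1/2 + (q - m0)/m < 1/2`. -/
theorem stmt_3 (m : ℕ) (hm : 2 ≤ m) (m0 : ℕ) (hm0 : m0 = m / 2 + 1)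
    (l s p q : ℕ) (hl : 2 ≤ l) (hlm0 : l ≤ m0) (hs : 2 ≤ s) (hq : 1 ≤ q)
    (j : Fin s → ℕ) (hj : ∀ i, 1 ≤ j i ∧ j i ≤ l - 1)
    (hsum : (∑ i, j i) + q + p = l + 1)
    (A : Finset (Fin s))
    (hA : A = {i : Fin s | ((j i : ℝ)) ≥ (m0 : ℝ) + 1 - (m : ℝ) / 2}.toFinset) :
    (∑ i ∈ A, (1/2 + ((j i : ℝ) - 1 - (m0 : ℝ)) / (m : ℝ)))
      + 1/2 + ((q : ℝ) - (m0 : ℝ)) / (m : ℝ) < 1/2 :=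
  stmt_3_general m hm m0 hm0 l s p q hlm0 hs j hj hsum A
end
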